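/- For n > 3, any automorphism of FQ_n that fixes a vertex v and fixes every neighbor of v is the identity automorphism. -/

import Mathlib

/-- The folded hypercube: vertices are elements of `Z_2^n`; two vertices are adjacent
iff they differ in exactly one coordinate or in all `n` coordinates. -/
def FQ (n : ℕ) : SimpleGraph (Fin n → ZMod 2) :=
  SimpleGraph.fromRel (fun x y => (∃ i, y = x + Pi.single i 1) ∨ y = x + 1)

/-!
`FQ n` is the Cayley graph of `Z_2^n` with connection set `S = {e_1, …, e_n, 1}`. The only
relation among the elements of `S` is `e_1 + ⋯ + e_n + 1 = 0`, which has `n + 1 ≥ 5` terms; hence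
`s + a = t + b` with `s ≠ t` in `S` forces `{a, b} = {s, t}`, i.e. two neighbours `x + s`,
`x + t` of `x` have exactly `x` and `x + s + t` as common neighbours. So an automorphism fixing
`x` and all its neighbours also fixes every vertex at distance two from `x`: it fixes each
neighbour of `x` together with that neighbour's neighbours. Since `FQ n` is connected, this
property spreads from `v` to every vertex.
-/

namespace SimpleGraph

variable {V : Type*} {G : SimpleGraph V}

lemma Reachable.induction_on_adj {P : V → Prop} (hP : ∀ x y, G.Adj x y → P x → P y) {u v : V}
    (huv : G.Reachable u v) (hu : P u) : P v := by
  rw [reachable_iff_reflTransGen] at huv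
  induction huv with
  | refl => exact hu
  | tail _ hyz ih => exact hP _ _ hyz ih

lemma Iso.apply_eq_self_of_commonNeighbors_subset (φ : G ≃g G) {x u₁ u₂ w : V} (hx : φ x = x)
    (h₁ : φ u₁ = u₁) (h₂ : φ u₂ = u₂) (hw : w ∈ G.commonNeighbors u₁ u₂) (hwx : w ≠ x)
    (hsub : G.commonNeighbors u₁ u₂ ⊆ {x, w}) : φ w = w := by
  have hφw : φ w ∈ G.commonNeighbors u₁ u₂ := by
    rw [mem_commonNeighbors] at hw ⊢
    rwa [← h₁, ← h₂, φ.map_adj_iff, φ.map_adj_iff]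
  rcases hsub hφw with hφwx | hφww
  · exact absurd (φ.injective (hφwx.trans hx.symm)) hwx
  · exact hφww

end SimpleGraph

lemma Fin.exists_ne_ne_ne {n : ℕ} (hn : 3 < n) (i j k : Fin n) :
    ∃ m, m ≠ i ∧ m ≠ j ∧ m ≠ k := by
  obtain ⟨m, -, hm⟩ := Finset.exists_mem_notMem_of_card_lt_card
    (s := {i, j, k}) (t := Finset.univ) (by simpa using Finset.card_le_three.trans_lt hn)
  simp only [Finset.mem_insert, Finset.mem_singleton, not_or] at hm
  exact ⟨m, hm⟩

namespace FQ

variable {n : ℕ}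

def generators (n : ℕ) : Set (Fin n → ZMod 2) := insert 1 (Set.range fun i => Pi.single i 1)

lemma zero_notMem_generators [NeZero n] : (0 : Fin n → ZMod 2) ∉ generators n := by
  rintro (h | ⟨i, h⟩)
  · simpa using congrFun h 0
  · simpa using congrFun h i

lemma adj_iff [NeZero n] {x y : Fin n → ZMod 2} : (FQ n).Adj x y ↔ x + y ∈ generators n := by
  have hrel : ∀ a b : Fin n → ZMod 2,
      ((∃ i, b = a + Pi.single i 1) ∨ b = a + 1) ↔ a + b ∈ generators n := by
    intro a b
    have hcancel : ∀ s, b = a + s ↔ a + b = s := fun s => by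
      constructor <;> rintro rfl <;> grind
    simp only [generators, Set.mem_insert_iff, Set.mem_range, hcancel, eq_comm (b := a + b),
      or_comm]
  rw [FQ, SimpleGraph.fromRel_adj, hrel, hrel, add_comm y, or_self, and_iff_right_iff_imp]
  rintro h rfl
  exact zero_notMem_generators (ZModModule.add_self x ▸ h)

lemma adj_add [NeZero n] (x : Fin n → ZMod 2) {s : Fin n → ZMod 2} (hs : s ∈ generators n) :
    (FQ n).Adj x (x + s) :=
  adj_iff.mpr (by rwa [← add_assoc, ZModModule.add_self, zero_add])

lemma connected (n : ℕ) : (FQ n).Connected := by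
  have hsingle : ∀ (i : Fin n) (c : ZMod 2) x, (FQ n).Reachable x (x + Pi.single i c) := by
    intro i c x
    have : NeZero n := ⟨i.pos.ne'⟩
    obtain rfl | rfl : c = 0 ∨ c = 1 := by decide +revert
    · simp
    · exact (adj_add x (Set.mem_insert_of_mem _ ⟨i, rfl⟩)).reachable
  refine (SimpleGraph.connected_iff_exists_forall_reachable _).mpr ⟨0, fun x => ?_⟩
  have hsum := Finset.sum_induction (s := Finset.univ) (fun i => Pi.single i (x i))
    (fun d => ∀ y, (FQ n).Reachable y (y + d))
    (fun a b ha hb y => by simpa [add_assoc] using (ha y).trans (hb (y + a)))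
    (fun y => by simp) (fun i _ => hsingle i (x i))
  simpa [Finset.univ_sum_single] using hsum 0

lemma eq_or_eq_of_add_eq_add (hn : 3 < n) {s t a b : Fin n → ZMod 2} (hs : s ∈ generators n)
    (ht : t ∈ generators n) (ha : a ∈ generators n) (hb : b ∈ generators n) (hst : s ≠ t)
    (h : s + a = t + b) : a = s ∨ a = t := by
  have : NeZero n := ⟨by omega⟩
  wlog hsingle : s ∈ Set.range (fun i => Pi.single i 1) generalizing s t a b with H
  · obtain rfl : s = 1 := hs.resolve_right hsingle
    rcases ht with rfl | ht
    · exact absurd rfl hst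
    rcases H (.inr ht) hs hb ha hst.symm h.symm ht with rfl | rfl <;> grind
  obtain ⟨i, rfl⟩ := hsingle
  rcases ht with rfl | ⟨j, rfl⟩ <;> rcases ha with rfl | ⟨k, rfl⟩ <;>
    rcases hb with rfl | ⟨l, rfl⟩
  · exact .inr rfl
  · exact .inr rfl
  · left; grind
  -- When exactly one of `t, a, b` is `1`, look at a coordinate missed by the three `e`'s.
  · obtain ⟨m, hmi, hmk, hml⟩ := Fin.exists_ne_ne_ne hn i k l
    simpa [Pi.single_apply, hmi, hmk, hml] using congrFun h m
  · grind
  · obtain ⟨m, hmi, hmj, hml⟩ := Fin.exists_ne_ne_ne hn i j l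
    simpa [Pi.single_apply, hmi, hmj, hml] using congrFun h m
  · obtain ⟨m, hmi, hmj, hmk⟩ := Fin.exists_ne_ne_ne hn i j k
    simpa [Pi.single_apply, hmi, hmj, hmk] using congrFun h m
  · have hi := congrFun h i
    have hk := congrFun h k
    simp only [Pi.add_apply, Pi.single_apply] at hi hk
    have hij : i ≠ j := fun hij => hst (hij ▸ rfl)
    grind

lemma commonNeighbors_add_subset (hn : 3 < n) (x : Fin n → ZMod 2) {s t : Fin n → ZMod 2}
    (hs : s ∈ generators n) (ht : t ∈ generators n) (hst : s ≠ t) :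
    (FQ n).commonNeighbors (x + s) (x + t) ⊆ {x, x + s + t} := by
  have : NeZero n := ⟨by omega⟩
  intro z hz
  rw [SimpleGraph.mem_commonNeighbors, adj_iff, adj_iff] at hz
  rcases eq_or_eq_of_add_eq_add hn hs ht hz.1 hz.2 hst (by grind) with h | h
  · exact .inl (by grind)
  · exact .inr (by grind)

lemma apply_eq_self_of_adj_of_adj (hn : 3 < n) (φ : FQ n ≃g FQ n) {x y w : Fin n → ZMod 2}
    (hx : φ x = x) (hxN : ∀ u, (FQ n).Adj x u → φ u = u) (hxy : (FQ n).Adj x y)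
    (hyw : (FQ n).Adj y w) : φ w = w := by
  have : NeZero n := ⟨by omega⟩
  obtain ⟨s, hs, rfl⟩ : ∃ s ∈ generators n, y = x + s := ⟨x + y, adj_iff.mp hxy, by grind⟩
  obtain ⟨t, ht, rfl⟩ : ∃ t ∈ generators n, w = x + s + t :=
    ⟨x + s + w, adj_iff.mp hyw, by grind⟩
  obtain rfl | hst := eq_or_ne s t
  · simpa [add_assoc, ZModModule.add_self] using hx
  have hwx : x + s + t ≠ x := by grind
  refine φ.apply_eq_self_of_commonNeighbors_subset hx (hxN _ hxy) (hxN _ (adj_add x ht)) ?_ hwx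
    (commonNeighbors_add_subset hn x hs ht hst)
  rw [SimpleGraph.mem_commonNeighbors, add_right_comm x s t]
  exact ⟨add_right_comm x t s ▸ adj_add _ ht, adj_add _ hs⟩

end FQ

theorem fq_fix_closed_neighborhood_eq_id (n : ℕ) (hn : 3 < n)
    (φ : FQ n ≃g FQ n) (v : Fin n → ZMod 2) (hv : φ v = v)
    (hN : ∀ w, (FQ n).Adj v w → φ w = w) :
    ∀ x, φ x = x := by
  have step : ∀ x y, (FQ n).Adj x y → (φ x = x ∧ ∀ w, (FQ n).Adj x w → φ w = w) →
      (φ y = y ∧ ∀ w, (FQ n).Adj y w → φ w = w) := fun x y hxy ⟨hx, hxN⟩ =>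
    ⟨hxN y hxy, fun _ hyw => FQ.apply_eq_self_of_adj_of_adj hn φ hx hxN hxy hyw⟩
  exact fun x => (((FQ.connected n).preconnected v x).induction_on_adj step ⟨hv, hN⟩).1
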